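/- Fix real parameters M_m > 0, v_{m1} < v_{m2}, v_{r2}, and set c := v_{r2} − v_{m2} + v_{m1}. At every point (U, V) where exp((V − c)/(4·M_m))·f((c − U)/(4·M_m)) > −1, the function R_m is partially differentiable in V, R_m(U, V) > 0, and ∂R_m/∂V = (1/2)·(1 − 2·M_m/R_m(U, V)). -/

import Mathlib

/-- `f x = (x - 1) * exp x`; in the paper this is `κ⁻¹`. -/
noncomputable def f (x : ℝ) : ℝ := (x - 1) * Real.exp x

/-- The Kruskal function `κ`, the inverse of the restriction of `f` to `(0, ∞)`. -/
noncomputable def kappa (z : ℝ) : ℝ := Function.invFunOn f (Set.Ioi 0) z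

/-!
Since `f' x = x eˣ`, the inverse function theorem gives `κ' = 1 / (κ e^κ)`. Along
`z(v) = e^{h(v)} K` we have `z' = h' z` and `z = f (κ z) = (κ - 1) e^κ`, so the chain rule
yields `(κ ∘ z)' = h' (1 - 1/κ)`. With `h' = 1/(4 Mₘ)` and `Rₘ = 2 Mₘ κ` this is
`(1 - 2 Mₘ/Rₘ)/2`.
-/

open Set Real

lemma hasDerivAt_f (x : ℝ) : HasDerivAt f (x * exp x) x :=
  (((hasDerivAt_id' x).sub_const 1).mul (hasDerivAt_exp x)).congr_deriv (by ring)

lemma continuous_f : Continuous f := by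
  unfold f
  fun_prop

lemma f_zero : f 0 = -1 := by simp [f]

lemma strictMonoOn_f : StrictMonoOn f (Ici 0) := by
  refine strictMonoOn_of_deriv_pos (convex_Ici 0) continuous_f.continuousOn fun x hx => ?_
  rw [interior_Ici] at hx
  rw [(hasDerivAt_f x).deriv]
  exact mul_pos hx (exp_pos x)

lemma image_f_Ioi : f '' Ioi 0 = Ioi (-1) := by
  refine Subset.antisymm ?_ fun z (hz : -1 < z) => ?_
  · rintro _ ⟨x, hx, rfl⟩
    simpa only [f_zero, mem_Ioi] using
      strictMonoOn_f (mem_Ici.2 le_rfl) (Ioi_subset_Ici_self hx) hx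
  · have hb : z < f (z + 2) := by
      have : 1 < exp (z + 2) := one_lt_exp_iff.2 (by linarith)
      unfold f
      nlinarith
    obtain ⟨x, hx, rfl⟩ :=
      intermediate_value_Ioo (by linarith) continuous_f.continuousOn ⟨f_zero ▸ hz, hb⟩
    exact ⟨x, hx.1, rfl⟩

lemma kappa_pos {z : ℝ} (hz : -1 < z) : 0 < kappa z :=
  Function.invFunOn_mem (show z ∈ f '' Ioi 0 by rwa [image_f_Ioi])

lemma f_kappa {z : ℝ} (hz : -1 < z) : f (kappa z) = z :=
  Function.invFunOn_eq (show z ∈ f '' Ioi 0 by rwa [image_f_Ioi])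

lemma kappa_f {x : ℝ} (hx : 0 < x) : kappa (f x) = x :=
  (strictMonoOn_f.mono Ioi_subset_Ici_self).injOn.leftInvOn_invFunOn hx

lemma strictMonoOn_kappa : StrictMonoOn kappa (Ioi (-1)) := fun z₁ h₁ z₂ h₂ h =>
  (strictMonoOn_f.lt_iff_lt (kappa_pos h₁).le (kappa_pos h₂).le).1
    (by rwa [f_kappa h₁, f_kappa h₂])

lemma continuousAt_kappa {z : ℝ} (hz : -1 < z) : ContinuousAt kappa z := by
  refine strictMonoOn_kappa.continuousAt_of_image_mem_nhds (Ioi_mem_nhds hz)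
    (Filter.mem_of_superset (Ioi_mem_nhds (kappa_pos hz)) fun x (hx : 0 < x) => ?_)
  exact ⟨f x, image_f_Ioi ▸ mem_image_of_mem f hx, kappa_f hx⟩

lemma hasDerivAt_kappa {z : ℝ} (hz : -1 < z) :
    HasDerivAt kappa (kappa z * exp (kappa z))⁻¹ z :=
  HasDerivAt.of_local_left_inverse (continuousAt_kappa hz) (hasDerivAt_f (kappa z))
    (mul_pos (kappa_pos hz) (exp_pos _)).ne'
    (by filter_upwards [Ioi_mem_nhds hz] with y hy using f_kappa hy)

lemma hasDerivAt_kappa_exp_mul_const {h : ℝ → ℝ} {a K v : ℝ} (hh : HasDerivAt h a v)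
    (hz : -1 < exp (h v) * K) :
    HasDerivAt (fun v => kappa (exp (h v) * K)) (a * (1 - (kappa (exp (h v) * K))⁻¹)) v := by
  refine ((hasDerivAt_kappa hz).comp v (hh.exp.mul_const K)).congr_deriv ?_
  set r := kappa (exp (h v) * K)
  have hr : r ≠ 0 := (kappa_pos hz).ne'
  rw [mul_right_comm, mul_comm _ a, ← f_kappa hz, f]
  field_simp
  ring

theorem Rm_partial_V_general (Mm c : ℝ)
    (hM : Mm > 0)
    (Rm : ℝ → ℝ → ℝ)
    (hRm : ∀ U V : ℝ,
      Rm U V = 2 * Mm * kappa (Real.exp ((V - c) / (4 * Mm)) * f ((c - U) / (4 * Mm)))) :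
    ∀ U V : ℝ, Real.exp ((V - c) / (4 * Mm)) * f ((c - U) / (4 * Mm)) > -1 →
      Rm U V > 0 ∧
      HasDerivAt (fun v => Rm U v) ((1 / 2) * (1 - 2 * Mm / Rm U V)) V := by
  intro U V hz
  have hR : 0 < Rm U V := hRm U V ▸ mul_pos (by positivity) (kappa_pos hz)
  refine ⟨hR, ?_⟩
  have hlin : HasDerivAt (fun v => (v - c) / (4 * Mm)) (1 / (4 * Mm)) V :=
    ((hasDerivAt_id' V).sub_const c).div_const (4 * Mm)
  rw [show (fun v => Rm U v) = _ from funext (hRm U)]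
  refine ((hasDerivAt_kappa_exp_mul_const hlin hz).const_mul (2 * Mm)).congr_deriv ?_
  rw [hRm U V]
  field_simp
  ring

theorem Rm_partial_V (Mm vm1 vm2 vr2 c : ℝ)
    (hM : Mm > 0) (hv : vm1 < vm2) (hc : c = vr2 - vm2 + vm1)
    (Rm : ℝ → ℝ → ℝ)
    (hRm : ∀ U V : ℝ,
      Rm U V = 2 * Mm * kappa (Real.exp ((V - c) / (4 * Mm)) * f ((c - U) / (4 * Mm)))) :
    ∀ U V : ℝ, Real.exp ((V - c) / (4 * Mm)) * f ((c - U) / (4 * Mm)) > -1 →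
      Rm U V > 0 ∧
      HasDerivAt (fun v => Rm U v) ((1 / 2) * (1 - 2 * Mm / Rm U V)) V :=
  Rm_partial_V_general Mm c hM Rm hRm
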